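/- For the independence Metropolis–Hastings sampler with strictly positive prior g̃ and target π on a finite set Ω, the stationary (per-step) rejection probability satisfies ∑_{ω,ω'} π(ω) g̃(ω') (1 − min{1, (g̃(ω)π(ω'))/(g̃(ω')π(ω))}) ≤ 2 · ‖π − g̃‖_TV, where ‖π − g̃‖_TV = (1/2) ∑_ω |π(ω) − g̃(ω)|. -/

import Mathlib

/-- For the independence Metropolis–Hastings sampler with strictly positive prior `g̃` and
target `π` on a finite set, the stationary per-step rejection probability is bounded by
twice the total variation distance between `π` and `g̃`. -/
theorem stationary_rejection_le_two_tv {Ω : Type*} [Fintype Ω]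
    (π g : Ω → ℝ) (hπ : ∀ ω, 0 < π ω) (hg : ∀ ω, 0 < g ω)
    (hπ1 : ∑ ω, π ω = 1) (hg1 : ∑ ω, g ω = 1) :
    ∑ ω : Ω, ∑ ω' : Ω,
        π ω * g ω' * (1 - min 1 ((g ω * π ω') / (g ω' * π ω)))
      ≤ 2 * ((1 : ℝ) / 2 * ∑ ω, |π ω - g ω|) := by
  have key : ∀ ω ω' : Ω,
      π ω * g ω' * (1 - min 1 ((g ω * π ω') / (g ω' * π ω)))
        = ((π ω * g ω' - g ω * π ω') + |π ω * g ω' - g ω * π ω'|) / 2 := by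
    intro ω ω'
    have hc : (0:ℝ) < g ω' * π ω := mul_pos (hg ω') (hπ ω)
    have h1 : min 1 ((g ω * π ω') / (g ω' * π ω))
        = min (g ω' * π ω) (g ω * π ω') / (g ω' * π ω) := by
      nth_rewrite 1 [← div_self hc.ne']
      rw [min_div_div_right hc.le]
    rw [h1]
    have h3 : π ω * g ω' * (1 - min (g ω' * π ω) (g ω * π ω') / (g ω' * π ω))
        = π ω * g ω' - min (g ω' * π ω) (g ω * π ω') := by
      rw [mul_sub, mul_one, mul_div_assoc', mul_comm (π ω) (g ω'), mul_div_cancel_left₀ _ hc.ne']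
    rw [h3]
    rcases le_total (g ω * π ω') (π ω * g ω') with h | h
    · rw [min_eq_right (by rw [mul_comm (g ω') (π ω)]; exact h),
        abs_of_nonneg (by linarith)]
      ring
    · rw [min_eq_left (by rw [mul_comm (g ω') (π ω)]; exact h),
        abs_of_nonpos (by linarith), mul_comm (g ω') (π ω)]
      ring
  simp only [key]
  have hzero : ∑ ω : Ω, ∑ ω' : Ω, (π ω * g ω' - g ω * π ω') = 0 := by
    simp only [Finset.sum_sub_distrib, ← Finset.mul_sum, ← Finset.sum_mul, hπ1, hg1]
    ring
  have hrw : ∑ ω : Ω, ∑ ω' : Ω,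
      ((π ω * g ω' - g ω * π ω') + |π ω * g ω' - g ω * π ω'|) / 2
      = ((∑ ω : Ω, ∑ ω' : Ω, (π ω * g ω' - g ω * π ω'))
         + ∑ ω : Ω, ∑ ω' : Ω, |π ω * g ω' - g ω * π ω'|) / 2 := by
    simp only [add_div, Finset.sum_add_distrib, Finset.sum_div]
  rw [hrw, hzero, zero_add]
  have hbound : ∑ ω : Ω, ∑ ω' : Ω, |π ω * g ω' - g ω * π ω'|
      ≤ ∑ ω : Ω, ∑ ω' : Ω, (π ω * |g ω' - π ω'| + π ω' * |π ω - g ω|) := by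
    refine Finset.sum_le_sum fun ω _ => Finset.sum_le_sum fun ω' _ => ?_
    calc |π ω * g ω' - g ω * π ω'|
        ≤ |π ω * g ω' - π ω * π ω'| + |π ω * π ω' - g ω * π ω'| :=
          abs_sub_le _ _ _
      _ = π ω * |g ω' - π ω'| + π ω' * |π ω - g ω| := by
          rw [← mul_sub, ← sub_mul, abs_mul, abs_mul, abs_of_pos (hπ ω),
            abs_of_pos (hπ ω'), mul_comm |π ω - g ω| (π ω')]
  have hsum : ∑ ω : Ω, ∑ ω' : Ω, (π ω * |g ω' - π ω'| + π ω' * |π ω - g ω|)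
      = 2 * ∑ ω, |π ω - g ω| := by
    simp only [Finset.sum_add_distrib, ← Finset.mul_sum]
    rw [← Finset.sum_mul, hπ1]
    have : ∀ ω' : Ω, |g ω' - π ω'| = |π ω' - g ω'| := fun ω' => abs_sub_comm _ _
    simp only [this]
    have h4 : ∀ ω : Ω, ∑ ω' : Ω, π ω' * |π ω - g ω| = |π ω - g ω| := by
      intro ω; rw [← Finset.sum_mul, hπ1, one_mul]
    simp only [h4]
    ring
  linarith [hbound, hsum]
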